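/- Let m = c' · n · log(n / log L) / log L for a sufficiently large absolute constant c' > 0, and set r = n/m. If 1 ≤ n < L - 1 and L ≤ 2^(n/16), then C(r + n - 1, r) ≤ L. -/

import Mathlib

/-!
Write `t = log₂ L`, `s = n / t ≥ 16` and `K = log₂ s`, so that the floored quantity is
`r = ⌊x⌋` with `x = t / (c' K) ≤ n`. From `C(N, r) ≤ (e N / r)^r` and `r + n - 1 ≤ 2n` we get
`C(r + n - 1, r) ≤ (2 e n / r)^r ≤ exp (x · log (2 e n / x))`, the second step because
`a ↦ a log (c / a)` increases for `a ≤ c / e`. Finally `2 e n / x = 2 e c' K s ≤ s^c' = 2^(c' K)`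
once `c' ≥ 5`, so the exponent is at most `t log 2 = log L`.
-/

open Real
open scoped Nat

theorem Nat.choose_le_exp_one_mul_div_pow (N r : ℕ) :
    (N.choose r : ℝ) ≤ (exp 1 * N / r) ^ r := by
  have hfac : (0 : ℝ) < r ! := mod_cast r.factorial_pos
  have hpow : (r : ℝ) ^ r ≤ exp 1 ^ r * r ! := by
    rw [← div_le_iff₀ hfac, ← exp_nat_mul, mul_one]
    exact pow_div_factorial_le_exp _ (Nat.cast_nonneg r) r
  calc (N.choose r : ℝ) ≤ (N : ℝ) ^ r / r ! := Nat.choose_le_pow_div r N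
    _ ≤ exp 1 ^ r * N ^ r / (r : ℝ) ^ r := by
        rw [div_le_div_iff₀ hfac (mod_cast Nat.pow_self_pos)]
        nlinarith [mul_le_mul_of_nonneg_left hpow (by positivity : (0 : ℝ) ≤ (N : ℝ) ^ r)]
    _ = (exp 1 * N / r) ^ r := by rw [div_pow, mul_pow]

theorem mul_log_div_le_mul_log_div {a b c : ℝ} (ha : 0 < a) (hab : a ≤ b)
    (hbc : exp 1 * b ≤ c) : a * log (c / a) ≤ b * log (c / b) := by
  have hb : 0 < b := ha.trans_le hab
  have hc : 0 < c := lt_of_lt_of_le (by positivity) hbc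
  have hone : 1 ≤ log (c / b) := by
    rw [le_log_iff_exp_le (by positivity), le_div_iff₀ hb]
    linarith
  have hsplit : log (c / a) = log (c / b) + log (b / a) := by
    rw [← log_mul (by positivity) (by positivity), div_mul_div_cancel₀ hb.ne']
  have hba : a * log (b / a) ≤ b - a := by
    have := mul_le_mul_of_nonneg_left (log_le_sub_one_of_pos (div_pos hb ha)) ha.le
    rwa [mul_sub, mul_div_cancel₀ _ ha.ne', mul_one] at this
  rw [hsplit]
  nlinarith [mul_le_mul_of_nonneg_left hone (sub_nonneg.mpr hab)]

theorem choose_floor_add_sub_one_le_exp (n : ℕ) {x : ℝ} (hx : 0 < x) (hxn : x ≤ n) :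
    ((⌊x⌋₊ + n - 1).choose ⌊x⌋₊ : ℝ) ≤ exp (x * log (2 * exp 1 * n / x)) := by
  set r := ⌊x⌋₊
  have hrx : (r : ℝ) ≤ x := Nat.floor_le hx.le
  have he : 0 < exp 1 := exp_pos 1
  have hn : (0 : ℝ) < n := hx.trans_le hxn
  rcases Nat.eq_zero_or_pos r with hr | hr
  · rw [hr, Nat.choose_zero_right, Nat.cast_one, one_le_exp_iff]
    have : 1 ≤ 2 * exp 1 * n / x := by rw [le_div_iff₀ hx]; nlinarith [add_one_le_exp (1 : ℝ)]
    exact mul_nonneg hx.le (log_nonneg this)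
  have hr' : (0 : ℝ) < r := mod_cast hr
  have hsum : ((r + n - 1 : ℕ) : ℝ) ≤ 2 * n := by
    have : r ≤ n := by exact_mod_cast hrx.trans hxn
    exact_mod_cast (show r + n - 1 ≤ 2 * n by omega)
  calc ((r + n - 1).choose r : ℝ) ≤ (exp 1 * (r + n - 1 : ℕ) / r) ^ r :=
        Nat.choose_le_exp_one_mul_div_pow _ _
    _ ≤ (exp 1 * (2 * n) / r) ^ r := by gcongr
    _ = exp (r * log (2 * exp 1 * n / r)) := by
        rw [exp_nat_mul, exp_log (by positivity), mul_left_comm, ← mul_assoc]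
    _ ≤ exp (x * log (2 * exp 1 * n / x)) :=
        exp_le_exp.mpr (mul_log_div_le_mul_log_div hr' hrx (by nlinarith))

theorem log_two_mul_exp_one_mul_logb_mul_le {c s : ℝ} (hc : 5 ≤ c) (hs : 16 ≤ s) :
    log (2 * exp 1 * c * logb 2 s * s) ≤ c * log s := by
  have hl2 : 1 / 2 < log 2 := by linarith [log_two_gt_d9]
  have hl2' : log 2 < 1 := by linarith [log_two_lt_d9]
  have hs0 : 0 < s := by linarith
  set u := log s
  have hu : 2 ≤ u := by
    have := log_le_log (by norm_num) hs
    rw [show (16 : ℝ) = 2 ^ 4 by norm_num, Real.log_pow] at this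
    push_cast at this
    linarith
  have hloglog : -log (log 2) ≤ 1 := by
    have := log_le_sub_one_of_pos (inv_pos.mpr (by linarith : (0 : ℝ) < log 2))
    have : (log 2)⁻¹ < 2 := by rw [inv_lt_comm₀ (by linarith) (by norm_num)]; linarith
    rw [log_inv] at *
    linarith
  have hexpand :
      log (2 * exp 1 * c * logb 2 s * s) = log 2 + 1 + log c + log u - log (log 2) + u := by
    have hK : 0 < logb 2 s := logb_pos (by norm_num) (by linarith)
    rw [log_mul (by positivity) hs0.ne', log_mul (by positivity) hK.ne',
      log_mul (by positivity) (by positivity), log_mul (by norm_num) (by positivity), log_exp,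
      logb, log_div (by positivity) (by positivity)]
    ring
  rw [hexpand]
  nlinarith [log_le_sub_one_of_pos (show 0 < c by linarith),
    log_le_sub_one_of_pos (show 0 < u by linarith)]

/-- Supporting computation for Claim 2: taking
`m = c' · n · log(n/log L) / log L` for a sufficiently large absolute constant `c' > 0`
and `r = n/m`, if `1 ≤ n < L - 1` and `L ≤ 2^(n/16)` then `C(r+n-1, r) ≤ L`
(logs base 2). -/
theorem stmt4 : ∃ c₀ : ℝ, 0 < c₀ ∧ ∀ c' : ℝ, c₀ ≤ c' → ∀ n L : ℕ, 1 ≤ n → n < L - 1 →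
    (L : ℝ) ≤ (2 : ℝ) ^ ((n : ℝ) / 16) →
    ((⌊(n : ℝ) / (c' * n * Real.logb 2 ((n : ℝ) / Real.logb 2 L) / Real.logb 2 L)⌋₊
        + n - 1).choose
      ⌊(n : ℝ) / (c' * n * Real.logb 2 ((n : ℝ) / Real.logb 2 L) / Real.logb 2 L)⌋₊ : ℝ)
      ≤ L := by
  refine ⟨5, by norm_num, fun c' hc n L hn hnL hL => ?_⟩
  have hL0 : (0 : ℝ) < L := by exact_mod_cast (show 0 < L by omega)
  have hn0 : (0 : ℝ) < n := by exact_mod_cast hn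
  set t := logb 2 L
  have ht0 : 0 < t := logb_pos (by norm_num) (by exact_mod_cast (show 1 < L by omega))
  have htn : t ≤ n / 16 := (logb_le_iff_le_rpow (by norm_num) hL0).mpr hL
  set s := n / t
  have hs : 16 ≤ s := by rw [le_div_iff₀ ht0]; linarith
  have hns : (n : ℝ) = t * s := by rw [mul_div_cancel₀ _ ht0.ne']
  set K := logb 2 s
  have hK : 1 ≤ K := by
    rw [le_logb_iff_rpow_le (by norm_num) (by positivity), rpow_one]
    linarith
  have hx : (n : ℝ) / (c' * n * K / t) = t / (c' * K) := by field_simp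
  have hxn : t / (c' * K) ≤ n := by
    have : 1 ≤ c' * K := by nlinarith
    rw [div_le_iff₀ (by positivity)]
    nlinarith
  rw [hx]
  refine (choose_floor_add_sub_one_le_exp n (by positivity) hxn).trans ?_
  rw [← exp_log hL0, exp_le_exp]
  calc t / (c' * K) * log (2 * exp 1 * n / (t / (c' * K)))
      = t / (c' * K) * log (2 * exp 1 * c' * K * s) := by rw [hns]; field_simp
    _ ≤ t / (c' * K) * (c' * log s) := by
        gcongr
        exact log_two_mul_exp_one_mul_logb_mul_le (by linarith) hs
    _ = log L := by
        have : 0 < log s := log_pos (by linarith)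
        simp only [t, K, logb]
        field_simp
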